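/- arXiv:1911.00230 — 4 statements merged into one kernel-verified Lean document; each statement's English description precedes it below -/
import Mathlib

section
/- Let $G$ be a finite simple graph and $v$ a vertex of $G$. For every subset $S \subseteq V(G)$, the cut-rank of $S$ in $G*v$ equals the cut-rank of $S$ in $G$, where $G*v$ denotes local complementation at $v$. -/
open scoped Classical

/-- The cut-rank of `S`: the `𝔽₂`-rank of the `S × (V \ S)` submatrix of the
adjacency matrix. -/
noncomputable def cutRank {V : Type*} [Fintype V] (G : SimpleGraph V) (S : Set V) : ℕ :=
  Matrix.rank (Matrix.of fun (x : S) (y : ↥Sᶜ) =>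
    if G.Adj x.1 y.1 then (1 : ZMod 2) else 0)

/-- Local complementation at a vertex `v`. -/
def localComp {V : Type*} (G : SimpleGraph V) (v : V) : SimpleGraph V where
  Adj x y := x ≠ y ∧ Xor' (G.Adj x y) (G.Adj v x ∧ G.Adj v y)
  symm := ⟨by
    intro x y ⟨hne, h⟩
    refine ⟨hne.symm, ?_⟩
    have h1 := G.adj_comm x y
    unfold Xor' at *
    rw [← h1, and_comm]; exact h⟩
  loopless := ⟨fun x h => h.1 rfl⟩

/-!
Over `𝔽₂` the adjacency matrix of `G * v` differs from that of `G` off the diagonal by the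
rank-one matrix `a aᵀ`, where `a` is the row of `v`. If `v ∈ S`, the cut matrix of `G * v` is
therefore obtained from that of `G` by adding `a x` times the row of `v` to each row `x`; if
`v ∉ S`, by the analogous column operation. Since `a v = 0`, such an operation is multiplication
by the invertible matrix `1 + a e_vᵀ`, which preserves rank.
-/

namespace Matrix

variable {m n R : Type*} [Fintype n] [CommRing R]

theorem isUnit_det_one_add_vecMulVec [Fintype m] {u v : m → R} (h : v ⬝ᵥ u = 0) :
    IsUnit (1 + vecMulVec u v).det := by
  rw [vecMulVec_eq Unit, det_one_add_replicateCol_mul_replicateRow, h, add_zero]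
  exact isUnit_one

theorem rank_add_vecMulVec_row [Fintype m] (M : Matrix m n R) {i : m} {u : m → R} (hu : u i = 0) :
    (M + vecMulVec u (M.row i)).rank = M.rank := by
  have hE : IsUnit (1 + vecMulVec u (Pi.single i 1)).det :=
    isUnit_det_one_add_vecMulVec (by simp [hu])
  rw [← rank_mul_eq_right_of_isUnit_det _ M hE, Matrix.add_mul, Matrix.one_mul, vecMulVec_mul,
    single_one_vecMul]

theorem rank_add_vecMulVec_col (M : Matrix m n R) {j : n} {w : n → R} (hw : w j = 0) :
    (M + vecMulVec (M.col j) w).rank = M.rank := by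
  have hE : IsUnit (1 + vecMulVec (Pi.single j 1) w).det :=
    isUnit_det_one_add_vecMulVec (by simp [hw])
  rw [← rank_mul_eq_left_of_isUnit_det _ M hE, Matrix.mul_add, Matrix.mul_one, mul_vecMulVec,
    mulVec_single_one]

end Matrix

open Matrix

section CutMatrix

variable {V : Type*} (R : Type*) (G : SimpleGraph V) (v : V)

noncomputable def cutMatrix [Zero R] [One R] (S : Set V) : Matrix S ↥Sᶜ R :=
  (G.adjMatrix R).submatrix (↑) (↑)

@[simp]
theorem cutMatrix_apply [Zero R] [One R] {S : Set V} (x : S) (z : ↥Sᶜ) :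
    cutMatrix R G S x z = G.adjMatrix R x z :=
  rfl

theorem cutRank_eq_rank_cutMatrix [Fintype V] (S : Set V) :
    cutRank G S = (cutMatrix (ZMod 2) G S).rank :=
  rfl

variable [Ring R] [CharP R 2]

theorem adjMatrix_localComp_apply_of_ne {x z : V} (h : x ≠ z) :
    (localComp G v).adjMatrix R x z =
      G.adjMatrix R x z + G.adjMatrix R v x * G.adjMatrix R v z := by
  have hadj : (localComp G v).Adj x z ↔ Xor (G.Adj x z) (G.Adj v x ∧ G.Adj v z) :=
    and_iff_right h
  simp only [SimpleGraph.adjMatrix_apply, hadj]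
  by_cases hxz : G.Adj x z <;> by_cases hvx : G.Adj v x <;> by_cases hvz : G.Adj v z <;>
    simp [hxz, hvx, hvz, CharTwo.add_self_eq_zero]

variable {S : Set V}

theorem cutMatrix_localComp_of_mem (hv : v ∈ S) :
    cutMatrix R (localComp G v) S =
      cutMatrix R G S +
        vecMulVec (fun x : S ↦ G.adjMatrix R v x) ((cutMatrix R G S).row ⟨v, hv⟩) := by
  ext x z
  exact adjMatrix_localComp_apply_of_ne R G v (ne_of_mem_of_not_mem x.2 z.2)

theorem cutMatrix_localComp_of_notMem (hv : v ∉ S) :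
    cutMatrix R (localComp G v) S =
      cutMatrix R G S +
        vecMulVec ((cutMatrix R G S).col ⟨v, hv⟩) (fun z : ↥Sᶜ ↦ G.adjMatrix R v z) := by
  ext x z
  simp only [Matrix.add_apply, vecMulVec_apply, col_apply, cutMatrix_apply,
    G.isSymm_adjMatrix.apply v x]
  exact adjMatrix_localComp_apply_of_ne R G v (ne_of_mem_of_not_mem x.2 z.2)

end CutMatrix

/-- Cut-rank is invariant under local complementation. -/
theorem cutRank_localComp {V : Type*} [Fintype V] (G : SimpleGraph V) (v : V) (S : Set V) :
    cutRank (localComp G v) S = cutRank G S := by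
  have hvv : G.adjMatrix (ZMod 2) v v = 0 := by simp
  rw [cutRank_eq_rank_cutMatrix, cutRank_eq_rank_cutMatrix]
  by_cases hv : v ∈ S
  · rw [cutMatrix_localComp_of_mem _ G v hv]
    exact rank_add_vecMulVec_row _ hvv
  · rw [cutMatrix_localComp_of_notMem _ G v hv]
    exact rank_add_vecMulVec_col _ hvv
end

section
/- If a finite simple graph $G$ on at least two vertices has rank-depth $m$, then $G$ has a connected component whose rank-depth is at least $m - 1$. -/
open scoped Classical

/-- A vertex of a tree is a leaf if it has exactly one neighbor. -/
def IsLeaf {t : Type*} (T : SimpleGraph t) (x : t) : Prop :=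
  (T.neighborSet x).ncard = 1

/-- The graph obtained from `T` by deleting the vertex `v` (keeping `v` isolated). -/
def avoid {t : Type*} (T : SimpleGraph t) (v : t) : SimpleGraph t where
  Adj a b := T.Adj a b ∧ a ≠ v ∧ b ≠ v
  symm := ⟨fun a b h => ⟨h.1.symm, h.2.2, h.2.1⟩⟩
  loopless := ⟨fun a h => T.irrefl h.1⟩

/-- `G` has a decomposition `(T, σ)` of width at most `k` and radius at most `r`:
`T` is a tree whose leaves are in bijection `σ` with `V(G)`; for every non-leaf
node `v` of `T` and every union `X` of the blocks of the partition of `V(G)`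
induced by the components of `T - v`, the cut-rank of `X` is at most `k`. -/
def HasRankDecomp {V : Type*} [Fintype V] (G : SimpleGraph V) (k r : ℕ) : Prop :=
  ∃ (t : Type) (_ : Fintype t) (T : SimpleGraph t),
    T.IsTree ∧
    ∃ σ : V ≃ {x : t // IsLeaf T x},
      (∀ v : t, ¬ IsLeaf T v →
        ∀ X : Set V,
          (∀ u u' : V, (avoid T v).Reachable (σ u).1 (σ u').1 → (u ∈ X ↔ u' ∈ X)) →
          cutRank G X ≤ k) ∧
      ∃ c : t, ∀ y : t, T.dist c y ≤ r

/-- The rank-depth of `G`: the least `k` such that `G` admits a decomposition of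
width at most `k` and radius at most `k`; zero for graphs with fewer than two vertices. -/
noncomputable def rankDepth {V : Type*} [Fintype V] (G : SimpleGraph V) : ℕ :=
  if Fintype.card V < 2 then 0 else sInf {k | HasRankDecomp G k k}


/-!
If every connected component of `G` has rank-depth at most `k`, then `G` has a decomposition of
width `k` and radius `k + 1`: take an optimal decomposition of each component, move its centre to
a non-leaf node (a component on two vertices gets a star instead, an isolated vertex a single
node), and join all these centres to a new root. Every union of blocks at the root is a union of
components and has cut-rank `0`; at any other node the blocks are those of the component's own
decomposition, enlarged by whole other components, which does not raise the cut-rank. A connected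
`G` is its own component.
-/

open SimpleGraph

theorem Matrix.rank_le_rank_of_extend_zero {m n m' n' R : Type*} [CommRing R]
    [StrongRankCondition R] [Fintype n] [Fintype m'] [Fintype n'] [DecidableEq m] [DecidableEq n]
    (A : Matrix m n R) (B : Matrix m' n' R) {f : m' → m} {g : n' → n}
    (hf : Function.Injective f) (hg : Function.Injective g) (hB : ∀ a b, A (f a) (g b) = B a b)
    (hA : ∀ i j, A i j ≠ 0 → (∃ a, f a = i) ∧ ∃ b, g b = j) :
    A.rank ≤ B.rank := by
  have hfactor : A = (1 : Matrix m m R).submatrix id f * B * (1 : Matrix n n R).submatrix g id := by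
    ext i j
    by_cases hij : A i j = 0
    · simp only [hij, Matrix.mul_apply, Matrix.submatrix_apply, Matrix.one_apply, id_eq,
        ite_mul, one_mul, zero_mul, mul_ite, mul_one, mul_zero]
      refine (Finset.sum_eq_zero fun b _ => ?_).symm
      split_ifs with hb
      · refine Finset.sum_eq_zero fun a _ => ?_
        split_ifs with ha
        · rw [← hB, ← ha, hb, hij]
        · rfl
      · rfl
    · obtain ⟨⟨a, rfl⟩, ⟨b, rfl⟩⟩ := hA i j hij
      simp [Matrix.mul_apply, Matrix.one_apply, hf.eq_iff, hg.eq_iff, hB]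
  rw [hfactor]
  exact (Matrix.rank_mul_le_left _ _).trans (Matrix.rank_mul_le_right _ _)

section CutRank

variable {V : Type*} [Fintype V] (G : SimpleGraph V)

theorem two_mul_cutRank_le_card (X : Set V) : 2 * cutRank G X ≤ Fintype.card V := by
  have hX := Matrix.rank_le_card_height (Matrix.of fun (x : X) (y : ↥Xᶜ) =>
    if G.Adj x.1 y.1 then (1 : ZMod 2) else 0)
  have hXc := Matrix.rank_le_card_width (Matrix.of fun (x : X) (y : ↥Xᶜ) =>
    if G.Adj x.1 y.1 then (1 : ZMod 2) else 0)
  have hcard := Fintype.card_congr (Equiv.Set.sumCompl X)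
  rw [Fintype.card_sum] at hcard
  unfold cutRank
  omega

variable {G}

theorem cutRank_eq_zero_of_forall_adj_mem {X : Set V}
    (hX : ∀ x ∈ X, ∀ y, G.Adj x y → y ∈ X) : cutRank G X = 0 := by
  have hzero : (Matrix.of fun (x : X) (y : ↥Xᶜ) =>
      if G.Adj x.1 y.1 then (1 : ZMod 2) else 0) = 0 := by
    ext x y
    simp only [Matrix.of_apply, Matrix.zero_apply, ite_eq_right_iff, one_ne_zero, imp_false]
    exact fun hxy => y.2 (hX x x.2 y hxy)
  rw [cutRank, hzero, Matrix.rank_zero]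

theorem cutRank_le_cutRank_induce {s X : Set V} [Fintype s]
    (h : ∀ x ∈ X, ∀ y ∉ X, G.Adj x y → x ∈ s ∧ y ∈ s) :
    cutRank G X ≤ cutRank (G.induce s) (Subtype.val ⁻¹' X) := by
  obtain rfl : ‹Fintype s› = Subtype.fintype _ := Subsingleton.elim _ _
  refine Matrix.rank_le_rank_of_extend_zero _ _ (f := fun a => ⟨a.1.1, a.2⟩)
    (g := fun b => ⟨b.1.1, b.2⟩) ?_ ?_ (fun _ _ => rfl) ?_
  · exact fun a a' h => by simpa [Subtype.ext_iff] using h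
  · exact fun b b' h => by simpa [Subtype.ext_iff] using h
  · intro x y hxy
    have hadj : G.Adj x y := by simpa using hxy
    obtain ⟨hxs, hys⟩ := h x x.2 y y.2 hadj
    exact ⟨⟨⟨⟨x, hxs⟩, x.2⟩, rfl⟩, ⟨⟨⟨y, hys⟩, y.2⟩, rfl⟩⟩

end CutRank

namespace SimpleGraph

theorem sum_ncard_neighborSet {V : Type*} [Fintype V] (G : SimpleGraph V) :
    ∑ v, (G.neighborSet v).ncard = 2 * Nat.card G.edgeSet := by
  classical
  rw [Nat.card_eq_fintype_card, ← G.edgeFinset_card, ← G.sum_degrees_eq_twice_card_edges]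
  refine Finset.sum_congr rfl fun v _ => ?_
  rw [Set.ncard_eq_toFinset_card', Set.toFinset_card, G.card_neighborSet_eq_degree]

namespace Reachable

variable {α β : Type*} {G : SimpleGraph α} {H : SimpleGraph β} {x y : α}

theorem avoid_map (f : G →g H) {v : β} (hv : ∀ x, f x ≠ v) (h : G.Reachable x y) :
    (avoid H v).Reachable (f x) (f y) :=
  h.map (⟨f, fun hxy => (⟨f.map_adj hxy, hv _, hv _⟩ : _ ∧ _ ∧ _)⟩ : G →g avoid H v)

theorem avoid_map_avoid (f : G →g H) (hf : Function.Injective f) {a : α}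
    (h : (avoid G a).Reachable x y) : (avoid H (f a)).Reachable (f x) (f y) :=
  h.map (⟨f, fun ⟨hxy, hx, hy⟩ =>
    (⟨f.map_adj hxy, hf.ne hx, hf.ne hy⟩ : _ ∧ _ ∧ _)⟩ : avoid G a →g avoid H (f a))

end Reachable

namespace Connected

variable {τ : Type*} {T : SimpleGraph τ}

theorem dist_add_one_le_of_neighborSet_eq (hT : T.Connected) {x n y : τ}
    (hx : T.neighborSet x = {n}) (hy : y ≠ x) : T.dist n y + 1 ≤ T.dist x y := by
  obtain ⟨p, hp⟩ := hT.exists_walk_length_eq_dist x y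
  obtain ⟨z, hxz, q, rfl⟩ := Walk.exists_eq_cons_of_ne hy.symm p
  obtain rfl : z = n := by
    rw [← Set.mem_singleton_iff, ← hx]
    exact hxz
  rw [← hp, Walk.length_cons]
  exact Nat.add_le_add_right (dist_le q) 1

theorem not_isLeaf_of_neighborSet_eq [Fintype τ] (hT : T.Connected) (h3 : 3 ≤ Fintype.card τ)
    {x n : τ} (hx : T.neighborSet x = {n}) : ¬ IsLeaf T n := by
  intro hn
  obtain ⟨m, hm⟩ := Set.ncard_eq_one.mp hn
  obtain rfl : x = m := by
    have hxn : n ∈ T.neighborSet x := hx.symm ▸ Set.mem_singleton n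
    rw [← Set.mem_singleton_iff, ← hm]
    exact T.adj_symm hxn
  obtain ⟨z, -, hz⟩ := Finset.exists_mem_notMem_of_card_lt_card
    (s := {x, n}) (t := Finset.univ) (Finset.card_le_two.trans_lt (by rw [Finset.card_univ]; omega))
  simp only [Finset.mem_insert, Finset.mem_singleton, not_or] at hz
  have h₁ := hT.dist_add_one_le_of_neighborSet_eq hx hz.1
  have h₂ := hT.dist_add_one_le_of_neighborSet_eq hm hz.2
  omega

theorem exists_not_isLeaf_forall_dist_le [Fintype τ] (hT : T.Connected)
    (h3 : 3 ≤ Fintype.card τ) {c₀ : τ} {r : ℕ} (hr : ∀ y, T.dist c₀ y ≤ r) :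
    ∃ c, ¬ IsLeaf T c ∧ ∀ y, T.dist c y ≤ r := by
  by_cases hc₀ : IsLeaf T c₀
  · obtain ⟨n, hn⟩ := Set.ncard_eq_one.mp hc₀
    refine ⟨n, hT.not_isLeaf_of_neighborSet_eq h3 hn, fun y => ?_⟩
    by_cases hy : y = c₀
    · rw [hy, dist_comm]
      exact hr n
    · exact (Nat.le_of_succ_le (hT.dist_add_one_le_of_neighborSet_eq hn hy)).trans (hr y)
  · exact ⟨c₀, hc₀, hr⟩

end Connected

end SimpleGraph

/-- `x` is a leaf of `T` once a new neighbour is attached to `c`. -/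
def IsPlantedLeaf {τ : Type*} (T : SimpleGraph τ) (c x : τ) : Prop :=
  (T.neighborSet x).ncard + (if x = c then 1 else 0) = 1

theorem isPlantedLeaf_iff_isLeaf {τ : Type*} [Finite τ] [Nontrivial τ] {T : SimpleGraph τ}
    (hT : T.Connected) {c : τ} (hc : ¬ IsLeaf T c) (x : τ) :
    IsPlantedLeaf T c x ↔ IsLeaf T x := by
  unfold IsPlantedLeaf
  split_ifs with hx
  · subst hx
    obtain ⟨y, hy⟩ := (mem_support T).mp (hT.preconnected.support_eq_univ ▸ Set.mem_univ x)
    have : (T.neighborSet x).ncard ≠ 0 := Set.ncard_ne_zero_of_mem hy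
    exact iff_of_false (by omega) hc
  · rfl

section Graft

variable {ι : Type*} {t : ι → Type*} (T : ∀ i, SimpleGraph (t i)) (c : ∀ i, t i)

def graft : SimpleGraph (Option (Σ i, t i)) where
  Adj
    | none, none => False
    | none, some ⟨i, a⟩ => a = c i
    | some ⟨i, a⟩, none => a = c i
    | some ⟨i, a⟩, some ⟨j, b⟩ => ∃ h : i = j, (T j).Adj (h ▸ a) b
  symm := ⟨by
    rintro (_ | ⟨i, a⟩) (_ | ⟨j, b⟩) h
    · exact h
    · exact h
    · exact h
    · obtain ⟨rfl, h⟩ := h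
      exact ⟨rfl, h.symm⟩⟩
  loopless := ⟨by
    rintro (_ | ⟨i, a⟩) h
    · exact h
    · obtain ⟨_, h⟩ := h
      exact (T i).irrefl h⟩

variable {T c}

@[simp]
theorem graft_adj_none_some {i : ι} {a : t i} :
    (graft T c).Adj none (some ⟨i, a⟩) ↔ a = c i :=
  Iff.rfl

@[simp]
theorem graft_adj_some_none {i : ι} {a : t i} :
    (graft T c).Adj (some ⟨i, a⟩) none ↔ a = c i :=
  Iff.rfl

@[simp]
theorem graft_adj_some_some {i : ι} {a b : t i} :
    (graft T c).Adj (some ⟨i, a⟩) (some ⟨i, b⟩) ↔ (T i).Adj a b :=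
  ⟨fun ⟨_, h⟩ => h, fun h => ⟨rfl, h⟩⟩

theorem graft_not_adj_of_ne {i j : ι} (hij : i ≠ j) (a : t i) (b : t j) :
    ¬ (graft T c).Adj (some ⟨i, a⟩) (some ⟨j, b⟩) :=
  fun ⟨h, _⟩ => hij h

variable (T c) in
def graftHom (i : ι) : T i →g graft T c where
  toFun a := some ⟨i, a⟩
  map_rel' := graft_adj_some_some.mpr

variable (T c) in
theorem graftHom_injective (i : ι) : Function.Injective (graftHom T c i) :=
  fun _ _ h => eq_of_heq (Sigma.mk.inj_iff.mp (Option.some.inj h)).2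

theorem graft_neighborSet_none :
    (graft T c).neighborSet none = Set.range fun i => some ⟨i, c i⟩ := by
  ext (_ | ⟨i, a⟩)
  · simp
  · simp [eq_comm]

theorem graft_neighborSet_some (i : ι) (a : t i) :
    (graft T c).neighborSet (some ⟨i, a⟩) =
      graftHom T c i '' (T i).neighborSet a ∪ (if a = c i then {none} else ∅) := by
  ext (_ | ⟨j, b⟩)
  · by_cases ha : a = c i <;> simp [ha, graftHom]
  · by_cases hij : i = j
    · subst hij
      by_cases ha : a = c i <;> simp [ha, graftHom]
    · simp [graft_not_adj_of_ne hij, graftHom, hij]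

theorem ncard_neighborSet_graft_none [Finite ι] :
    ((graft T c).neighborSet none).ncard = Nat.card ι := by
  rw [graft_neighborSet_none, Set.ncard_range_of_injective]
  exact fun i j h => (Sigma.mk.inj_iff.mp (Option.some.inj h)).1

theorem ncard_neighborSet_graft_some [∀ i, Finite (t i)] (i : ι) (a : t i) :
    ((graft T c).neighborSet (some ⟨i, a⟩)).ncard =
      ((T i).neighborSet a).ncard + if a = c i then 1 else 0 := by
  rw [graft_neighborSet_some, Set.ncard_union_eq ?_ (Set.toFinite _) (by split_ifs <;> simp),
    Set.ncard_image_of_injective _ (graftHom_injective T c i)]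
  · split_ifs <;> simp
  · split_ifs <;> simp [Set.disjoint_left, graftHom]

theorem isLeaf_graft_some_iff [∀ i, Finite (t i)] (i : ι) (a : t i) :
    IsLeaf (graft T c) (some ⟨i, a⟩) ↔ IsPlantedLeaf (T i) (c i) a := by
  rw [IsLeaf, IsPlantedLeaf, ncard_neighborSet_graft_some]

theorem not_isLeaf_graft_none [Finite ι] [Nontrivial ι] : ¬ IsLeaf (graft T c) none := by
  rw [IsLeaf, ncard_neighborSet_graft_none]
  exact Finite.one_lt_card.ne'

theorem graft_connected (hT : ∀ i, (T i).Preconnected) : (graft T c).Connected := by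
  have hroot : ∀ x, (graft T c).Reachable none x := by
    rintro (_ | ⟨i, a⟩)
    · rfl
    · exact (Adj.reachable rfl).trans ((hT i (c i) a).map (graftHom T c i))
  exact connected_iff_exists_forall_reachable _ |>.mpr ⟨none, hroot⟩

theorem graft_isTree [Fintype ι] [∀ i, Fintype (t i)] (hT : ∀ i, (T i).IsTree) :
    (graft T c).IsTree := by
  -- A connected graph is a tree iff it has one edge fewer than vertices; count edges by degrees.
  have hedges (i : ι) : Nat.card (T i).edgeSet + 1 = Fintype.card (t i) := by
    rw [← Nat.card_eq_fintype_card]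
    exact (isTree_iff_connected_and_card.mp (hT i)).2
  have hdegrees : 2 * Nat.card (graft T c).edgeSet =
      Nat.card ι + ∑ i, (2 * Nat.card (T i).edgeSet + 1) := by
    rw [← sum_ncard_neighborSet, Fintype.sum_option, Fintype.sum_sigma,
      ncard_neighborSet_graft_none]
    simp only [ncard_neighborSet_graft_some, Finset.sum_add_distrib, Finset.sum_ite_eq',
      Finset.mem_univ, if_true, sum_ncard_neighborSet]
  rw [isTree_iff_connected_and_card, Nat.card_eq_fintype_card (α := Option _),
    Fintype.card_option, Fintype.card_sigma, ← Finset.sum_congr rfl fun i _ => hedges i]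
  refine ⟨graft_connected fun i => (hT i).connected.preconnected, ?_⟩
  simp only [Finset.sum_add_distrib, ← Finset.mul_sum, Finset.sum_const, Finset.card_univ,
    smul_eq_mul, mul_one, Nat.card_eq_fintype_card] at hdegrees ⊢
  omega

theorem graft_dist_none_le (hT : ∀ i, (T i).Connected) (i : ι) (b : t i) :
    (graft T c).dist none (some ⟨i, b⟩) ≤ (T i).dist (c i) b + 1 := by
  obtain ⟨p, hp⟩ := (hT i).exists_walk_length_eq_dist (c i) b
  have hadj : (graft T c).Adj none (some ⟨i, c i⟩) := rfl
  calc (graft T c).dist none (some ⟨i, b⟩)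
      ≤ (Walk.cons hadj (p.map (graftHom T c i))).length := dist_le _
    _ = (T i).dist (c i) b + 1 := by
      show (p.map (graftHom T c i)).length + 1 = _
      rw [Walk.length_map, hp]

end Graft

section Decompositions

variable {V : Type*} [Fintype V] {G : SimpleGraph V}

def NodeWidthLE {τ : Type*} (G : SimpleGraph V) (T : SimpleGraph τ) (σ : V → τ) (v : τ)
    (k : ℕ) : Prop :=
  ∀ X : Set V, (∀ u u', (avoid T v).Reachable (σ u) (σ u') → (u ∈ X ↔ u' ∈ X)) →
    cutRank G X ≤ k

theorem NodeWidthLE.mono {τ : Type*} {T : SimpleGraph τ} {σ : V → τ} {v : τ} {k k' : ℕ}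
    (h : NodeWidthLE G T σ v k) (hk : k ≤ k') : NodeWidthLE G T σ v k' :=
  fun X hX => (h X hX).trans hk

theorem nodeWidthLE_card_div_two {τ : Type*} (G : SimpleGraph V) (T : SimpleGraph τ)
    (σ : V → τ) (v : τ) : NodeWidthLE G T σ v (Fintype.card V / 2) :=
  fun X _ => by have := two_mul_cutRank_le_card G X; omega

theorem HasRankDecomp.mono {k r k' r' : ℕ} (h : HasRankDecomp G k r) (hk : k ≤ k')
    (hr : r ≤ r') : HasRankDecomp G k' r' := by
  obtain ⟨t, ft, T, hT, σ, hwidth, c, hc⟩ := h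
  exact ⟨t, ft, T, hT, σ, fun v hv => NodeWidthLE.mono (hwidth v hv) hk, c,
    fun y => (hc y).trans hr⟩

theorem HasRankDecomp.radius_pos [Nonempty V] {k r : ℕ} (h : HasRankDecomp G k r) : 0 < r := by
  obtain ⟨t, _, T, hT, σ, -, c, hc⟩ := h
  obtain ⟨x, hx⟩ := σ (Classical.arbitrary V)
  obtain ⟨y, hxy⟩ : (T.neighborSet x).Nonempty :=
    Set.nonempty_of_ncard_ne_zero (by rw [hx]; exact one_ne_zero)
  by_contra! hr
  have hcenter : ∀ z, z = c := fun z =>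
    (hT.connected.dist_eq_zero_iff.mp (Nat.le_zero.mp ((hc z).trans hr))).symm
  exact T.ne_of_adj hxy ((hcenter x).trans (hcenter y).symm)

def HasCenteredRankDecomp (G : SimpleGraph V) (k r : ℕ) : Prop :=
  ∃ (t : Type) (_ : Fintype t) (T : SimpleGraph t), T.IsTree ∧
    ∃ σ : V ≃ {x : t // IsLeaf T x},
      (∀ v, ¬ IsLeaf T v → NodeWidthLE G T (fun u => (σ u).1) v k) ∧
      ∃ c, ¬ IsLeaf T c ∧ ∀ y, T.dist c y ≤ r

theorem HasCenteredRankDecomp.hasRankDecomp {k r : ℕ} (h : HasCenteredRankDecomp G k r) :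
    HasRankDecomp G k r := by
  obtain ⟨t, ft, T, hT, σ, hwidth, c, -, hc⟩ := h
  exact ⟨t, ft, T, hT, σ, hwidth, c, hc⟩

theorem HasRankDecomp.hasCenteredRankDecomp (hV : 3 ≤ Fintype.card V) {k r : ℕ}
    (h : HasRankDecomp G k r) : HasCenteredRankDecomp G k r := by
  obtain ⟨t, ft, T, hT, σ, hwidth, c₀, hr⟩ := h
  have ht : 3 ≤ Fintype.card t :=
    hV.trans ((Fintype.card_congr σ).trans_le (Fintype.card_subtype_le _))
  obtain ⟨c, hc, hcr⟩ := hT.connected.exists_not_isLeaf_forall_dist_le ht hr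
  exact ⟨t, ft, T, hT, σ, hwidth, c, hc, hcr⟩

theorem isLeaf_starGraph_iff {α : Type*} [Fintype α] (hα : 2 ≤ Fintype.card α)
    (x : Option α) : IsLeaf (starGraph none) x ↔ x.isSome := by
  rcases x with _ | a
  · have hnbr : (starGraph (none : Option α)).neighborSet none = {none}ᶜ := by
      ext (_ | b) <;> simp
    rw [IsLeaf, hnbr, Set.ncard_compl]
    simp only [Set.ncard_singleton, Nat.card_eq_fintype_card, Fintype.card_option,
      Option.isSome_none, Bool.false_eq_true, iff_false]
    omega
  · have hnbr : (starGraph (none : Option α)).neighborSet (some a) = {none} := by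
      ext (_ | b) <;> simp
    simp [IsLeaf, hnbr]

theorem hasCenteredRankDecomp_star (G : SimpleGraph V) (hV : 2 ≤ Fintype.card V) :
    HasCenteredRankDecomp G (Fintype.card V / 2) 1 := by
  set n := Fintype.card V
  have hn : 2 ≤ Fintype.card (Fin n) := by simpa using hV
  refine ⟨Option (Fin n), inferInstance, starGraph none, isTree_starGraph none,
    (Fintype.equivFin V).trans ((Equiv.optionIsSomeEquiv (Fin n)).symm.trans
      (Equiv.subtypeEquivRight fun x => (isLeaf_starGraph_iff hn x).symm)),
    fun v _ => nodeWidthLE_card_div_two G _ _ v, none, ?_, ?_⟩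
  · simp [isLeaf_starGraph_iff hn]
  · rintro (_ | a)
    · simp
    · exact (dist_eq_one_iff_adj.mpr (by simp)).le

theorem hasRankDecomp_rankDepth (hV : 2 ≤ Fintype.card V) :
    HasRankDecomp G (rankDepth G) (rankDepth G) := by
  rw [rankDepth, if_neg (by omega)]
  have hstar := (hasCenteredRankDecomp_star G hV).hasRankDecomp
  exact Nat.sInf_mem (s := {k | HasRankDecomp G k k})
    ⟨_, hstar.mono le_rfl (show 1 ≤ Fintype.card V / 2 by omega)⟩

theorem rankDepth_le_of_hasRankDecomp {k : ℕ} (h : HasRankDecomp G k k) : rankDepth G ≤ k := by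
  rw [rankDepth]
  split_ifs
  · exact Nat.zero_le k
  · exact Nat.sInf_le h

theorem one_le_rankDepth (hV : 2 ≤ Fintype.card V) : 1 ≤ rankDepth G :=
  have : Nonempty V := Fintype.card_pos_iff.mp (by omega)
  (hasRankDecomp_rankDepth hV).radius_pos

/-- A decomposition of `G` that becomes part of a larger one when `c` is joined to a new root. -/
def HasPlantedRankDecomp (G : SimpleGraph V) (k r : ℕ) : Prop :=
  ∃ (t : Type) (_ : Fintype t) (T : SimpleGraph t) (c : t), T.IsTree ∧
    ∃ σ : V ≃ {x : t // IsPlantedLeaf T c x},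
      (∀ v, ¬ IsPlantedLeaf T c v → NodeWidthLE G T (fun u => (σ u).1) v k) ∧
      ∀ y, T.dist c y ≤ r

theorem HasPlantedRankDecomp.mono {k r k' r' : ℕ} (h : HasPlantedRankDecomp G k r)
    (hk : k ≤ k') (hr : r ≤ r') : HasPlantedRankDecomp G k' r' := by
  obtain ⟨t, ft, T, c, hT, σ, hwidth, hc⟩ := h
  exact ⟨t, ft, T, c, hT, σ, fun v hv => (hwidth v hv).mono hk, fun y => (hc y).trans hr⟩

theorem HasCenteredRankDecomp.hasPlantedRankDecomp [Nonempty V] {k r : ℕ}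
    (h : HasCenteredRankDecomp G k r) : HasPlantedRankDecomp G k r := by
  obtain ⟨t, ft, T, hT, σ, hwidth, c, hc, hr⟩ := h
  have : Nontrivial t := by
    obtain ⟨x, hx⟩ := σ (Classical.arbitrary V)
    obtain ⟨y, hxy⟩ : (T.neighborSet x).Nonempty :=
      Set.nonempty_of_ncard_ne_zero (by rw [hx]; exact one_ne_zero)
    exact ⟨x, y, T.ne_of_adj hxy⟩
  have hleaf := isPlantedLeaf_iff_isLeaf hT.connected hc
  exact ⟨t, ft, T, c, hT, σ.trans (Equiv.subtypeEquivRight fun x => (hleaf x).symm),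
    fun v hv => hwidth v ((hleaf v).not.mp hv), hr⟩

theorem hasPlantedRankDecomp_of_card_eq_one (hV : Fintype.card V = 1) (k : ℕ) :
    HasPlantedRankDecomp G k 0 := by
  have hleaf : IsPlantedLeaf (⊥ : SimpleGraph PUnit) PUnit.unit PUnit.unit := by
    simp [IsPlantedLeaf]
  refine ⟨PUnit, inferInstance, ⊥, PUnit.unit, ⟨.of_subsingleton, isAcyclic_bot⟩,
    Fintype.equivOfCardEq ?_, fun v hv => absurd hleaf hv, fun y => by simp⟩
  rw [hV, eq_comm, Fintype.card_eq_one_iff]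
  exact ⟨⟨_, hleaf⟩, fun _ => Subsingleton.elim _ _⟩

theorem hasPlantedRankDecomp_of_rankDepth_le [Nonempty V] {k : ℕ} (h : rankDepth G ≤ k) :
    HasPlantedRankDecomp G k k := by
  obtain hV | hV | hV : Fintype.card V = 1 ∨ Fintype.card V = 2 ∨ 3 ≤ Fintype.card V := by
    have := Fintype.card_pos (α := V)
    omega
  · exact (hasPlantedRankDecomp_of_card_eq_one hV k).mono le_rfl (Nat.zero_le k)
  -- An optimal decomposition of a graph on two vertices may be a single edge, which has no
  -- non-leaf node to plant it at.
  · have hk : 1 ≤ k := (one_le_rankDepth hV.ge).trans h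
    have hstar := (hasCenteredRankDecomp_star G hV.ge).hasPlantedRankDecomp
    rw [hV] at hstar
    exact hstar.mono hk hk
  · exact (((hasRankDecomp_rankDepth (by omega)).mono h h).hasCenteredRankDecomp
      hV).hasPlantedRankDecomp

end Decompositions

section GraftDecomposition

variable {V : Type*} {G : SimpleGraph V} {ι : Type} {p : V → ι} {s : ι → Set V}
  (hs : ∀ i v, v ∈ s i ↔ p v = i) {t : ι → Type} {T : ∀ i, SimpleGraph (t i)}
  {c : ∀ i, t i} (σ : ∀ i, s i ≃ {x : t i // IsPlantedLeaf (T i) (c i) x})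

def graftLeaf (v : V) : Option (Σ i, t i) :=
  some ⟨p v, σ (p v) ⟨v, (hs _ _).mpr rfl⟩⟩

theorem graftLeaf_eq {i : ι} (u : s i) : graftLeaf hs σ u.1 = some ⟨i, σ i u⟩ := by
  obtain ⟨v, hv⟩ := u
  obtain rfl := (hs i v).mp hv
  rfl

theorem graftLeaf_injective : Function.Injective (graftLeaf hs σ) := by
  intro v w h
  have hpvw : p v = p w := (Sigma.mk.inj_iff.mp (Option.some.inj h)).1
  rw [graftLeaf_eq hs σ (⟨w, (hs _ _).mpr hpvw.symm⟩ : s (p v))] at h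
  exact congrArg Subtype.val
    ((σ (p v)).injective (Subtype.ext (graftHom_injective T c (p v) h)))

theorem isLeaf_graft_iff_mem_range [∀ i, Finite (t i)] [Finite ι] [Nontrivial ι]
    (x : Option (Σ i, t i)) : IsLeaf (graft T c) x ↔ x ∈ Set.range (graftLeaf hs σ) := by
  constructor
  · rcases x with _ | ⟨i, a⟩
    · exact fun h => absurd h not_isLeaf_graft_none
    · intro ha
      obtain ⟨u, hu⟩ := (σ i).surjective ⟨a, (isLeaf_graft_some_iff i a).mp ha⟩
      exact ⟨u.1, by rw [graftLeaf_eq, hu]⟩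
  · rintro ⟨v, rfl⟩
    exact (isLeaf_graft_some_iff _ _).mpr (σ _ _).2

theorem reachable_avoid_graftLeaf (hT : ∀ i, (T i).Preconnected) {x y : V} (hxy : p x = p y)
    {v : Option (Σ i, t i)} (hv : ∀ b, some ⟨p x, b⟩ ≠ v) :
    (avoid (graft T c) v).Reachable (graftLeaf hs σ x) (graftLeaf hs σ y) := by
  rw [graftLeaf_eq hs σ (⟨y, (hs _ _).mpr hxy.symm⟩ : s (p x))]
  exact (hT _ _ _).avoid_map (graftHom T c (p x)) hv

theorem nodeWidthLE_graft_none [Fintype V] (hp : ∀ x y, G.Adj x y → p x = p y)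
    (hT : ∀ i, (T i).Preconnected) : NodeWidthLE G (graft T c) (graftLeaf hs σ) none 0 := by
  intro X hX
  refine (cutRank_eq_zero_of_forall_adj_mem fun x hx y hxy => ?_).le
  exact (hX x y (reachable_avoid_graftLeaf hs σ hT (hp x y hxy)
    fun _ => Option.some_ne_none _)).mp hx

theorem nodeWidthLE_graft_some [Fintype V] (hp : ∀ x y, G.Adj x y → p x = p y)
    (hT : ∀ i, (T i).Preconnected) {i : ι} [Fintype (s i)] {a : t i} {k : ℕ}
    (hw : NodeWidthLE (G.induce (s i)) (T i) (fun u => (σ i u).1) a k) :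
    NodeWidthLE G (graft T c) (graftLeaf hs σ) (some ⟨i, a⟩) k := by
  intro X hX
  refine (cutRank_le_cutRank_induce fun x hx y hy hxy => ?_).trans (hw _ fun u w huw => ?_)
  -- An edge leaving `X` outside the `i`-th piece would join two leaves of another piece,
  -- which stay connected after deleting `some ⟨i, a⟩`.
  · have hpxy := hp x y hxy
    rw [hs, hs]
    by_contra hxi
    have hpx : p x ≠ i := fun h => hxi ⟨h, hpxy.symm.trans h⟩
    refine hy ((hX x y (reachable_avoid_graftLeaf hs σ hT hpxy fun b h => hpx ?_)).mp hx)
    exact (Sigma.mk.inj_iff.mp (Option.some.inj h)).1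
  · refine hX u w ?_
    rw [graftLeaf_eq, graftLeaf_eq]
    exact huw.avoid_map_avoid (graftHom T c i) (graftHom_injective T c i)

end GraftDecomposition

theorem hasRankDecomp_of_forall_hasPlantedRankDecomp {V : Type*} [Fintype V] {G : SimpleGraph V}
    {ι : Type} [Fintype ι] [Nontrivial ι] {p : V → ι} (hp : ∀ x y, G.Adj x y → p x = p y)
    {s : ι → Set V} [∀ i, Fintype (s i)] (hs : ∀ i v, v ∈ s i ↔ p v = i) {k r : ℕ}
    (h : ∀ i, HasPlantedRankDecomp (G.induce (s i)) k r) : HasRankDecomp G k (r + 1) := by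
  choose t ft T c hT σ hwidth hr using h
  have hpre : ∀ i, (T i).Preconnected := fun i => (hT i).connected.preconnected
  refine ⟨Option (Σ i, t i), inferInstance, graft T c, graft_isTree hT,
    (Equiv.ofInjective _ (graftLeaf_injective hs σ)).trans
      (Equiv.setCongr (Set.ext (isLeaf_graft_iff_mem_range hs σ)).symm), ?_, none, ?_⟩
  · rintro (_ | ⟨i, a⟩) ha
    · exact (nodeWidthLE_graft_none hs σ hp hpre).mono (Nat.zero_le k)
    · exact nodeWidthLE_graft_some hs σ hp hpre
        (hwidth i a ((isLeaf_graft_some_iff i a).not.mp ha))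
  · rintro (_ | ⟨i, b⟩)
    · simp
    · exact (graft_dist_none_le (fun i => (hT i).connected) i b).trans
        (Nat.add_le_add_right (hr i b) 1)

section Components

variable {V : Type*} [Fintype V] {G : SimpleGraph V}

theorem hasRankDecomp_of_induce {s : Set V} (hs : ∀ v, v ∈ s) {k r : ℕ}
    (h : HasRankDecomp (G.induce s) k r) : HasRankDecomp G k r := by
  obtain ⟨t, ft, T, hT, σ, hwidth, c, hc⟩ := h
  refine ⟨t, ft, T, hT, (Equiv.subtypeUnivEquiv hs).symm.trans σ, fun v hv X hX => ?_, c, hc⟩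
  exact (cutRank_le_cutRank_induce fun x _ y _ _ => ⟨hs x, hs y⟩).trans
    (hwidth v hv _ fun u w huw => hX u w huw)

theorem rankDepth_le_rankDepth_induce {s : Set V} [Fintype s] (hs : ∀ v, v ∈ s) :
    rankDepth G ≤ rankDepth (G.induce s) := by
  obtain rfl : ‹Fintype s› = Subtype.fintype _ := Subsingleton.elim _ _
  by_cases hV : Fintype.card V < 2
  · rw [rankDepth, if_pos hV]
    exact Nat.zero_le _
  · have hcard : Fintype.card s = Fintype.card V := Fintype.card_congr (Equiv.subtypeUnivEquiv hs)
    exact rankDepth_le_of_hasRankDecomp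
      (hasRankDecomp_of_induce hs (hasRankDecomp_rankDepth (by omega)))

theorem rankDepth_le_of_forall_connectedComponent {k : ℕ}
    (h : ∀ C : G.ConnectedComponent, rankDepth (G.induce C.supp) ≤ k) :
    rankDepth G ≤ k + 1 := by
  by_cases hV : Fintype.card V < 2
  · rw [rankDepth, if_pos hV]
    exact Nat.zero_le _
  obtain ⟨v⟩ : Nonempty V := Fintype.card_pos_iff.mp (by omega)
  rcases subsingleton_or_nontrivial G.ConnectedComponent with hC | hC
  · have hs : ∀ w, w ∈ (G.connectedComponentMk v).supp := fun w => Subsingleton.elim _ _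
    exact (rankDepth_le_rankDepth_induce hs).trans ((h _).trans (Nat.le_succ k))
  have : Fintype G.ConnectedComponent := Fintype.ofFinite _
  let e := Fintype.equivFin G.ConnectedComponent
  have : Nontrivial (Fin (Fintype.card G.ConnectedComponent)) := e.symm.nontrivial
  refine rankDepth_le_of_hasRankDecomp ((hasRankDecomp_of_forall_hasPlantedRankDecomp
    (p := fun w => e (G.connectedComponentMk w)) (s := fun i => (e.symm i).supp)
    (fun x y hxy => ?_) (fun i w => ?_) fun i => ?_).mono (Nat.le_succ k) le_rfl)
  · simp [ConnectedComponent.connectedComponentMk_eq_of_adj hxy]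
  · simp [Equiv.eq_symm_apply]
  · have : Nonempty (e.symm i).supp := (e.symm i).nonempty_supp.to_subtype
    exact hasPlantedRankDecomp_of_rankDepth_le (h _)

end Components

/-- A graph of rank-depth `m` (on at least two vertices) has a connected component of
rank-depth at least `m - 1`. -/
theorem exists_component_rankDepth_ge {V : Type*} [Fintype V] (G : SimpleGraph V) (m : ℕ)
    (hV : 2 ≤ Fintype.card V) (h : rankDepth G = m) :
    ∃ c : G.ConnectedComponent, m - 1 ≤ rankDepth (G.induce c.supp) := by
  obtain ⟨v⟩ : Nonempty V := Fintype.card_pos_iff.mp (by omega)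
  by_contra! hlt
  have hm := hlt (G.connectedComponentMk v)
  have := rankDepth_le_of_forall_connectedComponent (k := m - 2) fun C => by
    have := hlt C
    omega
  omega
end

section
/- Let $G$ be a finite simple graph of rank-width at most $q$ and let $M \subseteq V(G)$ with $|M| \geq 3k + 1$ for a positive integer $k$. Then there is a partition $(X, Y)$ of $V(G)$ such that the cut-rank $\rho_G(X) \leq q$ and both $|M \cap X| > k$ and $|M \cap Y| > k$. -/
open scoped Classical

/-- `G` admits a rank-decomposition of width at most `q`: a tree `T` all of whose
vertices have degree 1 or 3, together with a bijection `L` from `V(G)` to the leaves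
of `T`, such that every edge `ab` of `T` has width (the cut-rank of the set of
vertices mapped to leaves in the component of `T - ab` containing `a`) at most `q`. -/
def HasRankDecompWidth {V : Type*} [Fintype V] (G : SimpleGraph V) (q : ℕ) : Prop :=
  ∃ (t : Type) (_ : Fintype t) (T : SimpleGraph t),
    T.IsTree ∧
    (∀ x : t, (T.neighborSet x).ncard = 1 ∨ (T.neighborSet x).ncard = 3) ∧
    ∃ L : V ≃ {x : t // (T.neighborSet x).ncard = 1},
      ∀ a b : t, T.Adj a b →
        cutRank G {u : V | (T.deleteEdges {s(a, b)}).Reachable (L u).1 a} ≤ q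

/-- The rank-width of `G`: the minimum width over all rank-decompositions
(zero for graphs with at most one vertex). -/
noncomputable def rankWidth {V : Type*} [Fintype V] (G : SimpleGraph V) : ℕ :=
  if Fintype.card V < 2 then 0 else sInf {q | HasRankDecompWidth G q}

/-- The linear rank-width of `G`: the minimum over all orderings `v_1, …, v_n` of the
maximum cut-rank of a proper prefix (zero for graphs with fewer than two vertices). -/
noncomputable def linRankWidth {V : Type*} [Fintype V] (G : SimpleGraph V) : ℕ :=
  if Fintype.card V < 2 then 0 else
    sInf {w | ∃ e : Fin (Fintype.card V) ≃ V,
      ∀ i : Fin (Fintype.card V), cutRank G (e '' {j | j < i}) ≤ w}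

/-!
A rank-decomposition of `G` exists as soon as `|V(G)| ≥ 2`: cubic trees with any number `n ≥ 2`
of leaves are obtained from an edge by repeatedly attaching a cherry at a leaf. So
`rankWidth G ≤ q` provides a decomposition tree `T` of width at most `q`, and each edge `ab` of `T`
splits `V(G)` into its two sides, a cut of rank at most `q`.

Suppose no edge has more than `k` vertices of `M` on both sides. As `|M| > 2k`, every edge then has
exactly one side carrying at most `k` of them; orienting each edge away from that side, some
vertex `c` is a sink. The at most three sides at `c` carry at most `k` vertices of `M` each, and `c`
itself carries at most one, and only if it is a leaf; so `|M| ≤ max (3k) (k + 1) = 3k`.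
-/

namespace SimpleGraph

section EdgeSide

variable {V : Type*} {T : SimpleGraph V} {a b c x : V}

def edgeSide (T : SimpleGraph V) (a b : V) : Set V :=
  {x | (T.deleteEdges {s(a, b)}).Reachable x a}

lemma mem_edgeSide_self : a ∈ T.edgeSide a b := Reachable.refl a

lemma IsTree.notMem_edgeSide (hT : T.IsTree) (hab : T.Adj a b) : b ∉ T.edgeSide a b :=
  fun h ↦ isBridge_iff.mp (isAcyclic_iff_forall_adj_isBridge.mp hT.isAcyclic hab) h.symm

lemma Preconnected.mem_edgeSide_or_mem_edgeSide (hT : T.Preconnected) (a b x : V) :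
    x ∈ T.edgeSide a b ∨ x ∈ T.edgeSide b a := by
  obtain ⟨P, hP⟩ := hT.exists_isPath x a
  by_cases he : s(a, b) ∈ P.edges
  · have hb := P.snd_mem_support_of_mem_edges he
    have ha := Walk.endpoint_notMem_support_takeUntil hP hb (P.adj_of_mem_edges he).ne
    right
    refine reachable_deleteEdges_iff_exists_walk.mpr ⟨P.takeUntil b hb, fun he' ↦ ?_⟩
    exact ha ((P.takeUntil b hb).snd_mem_support_of_mem_edges he')
  · exact Or.inl (reachable_deleteEdges_iff_exists_walk.mpr ⟨P, he⟩)

lemma IsTree.compl_edgeSide (hT : T.IsTree) (hab : T.Adj a b) :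
    (T.edgeSide a b)ᶜ = T.edgeSide b a := by
  ext x
  refine ⟨(hT.connected.preconnected.mem_edgeSide_or_mem_edgeSide a b x).resolve_left,
    fun hb ha ↦ ?_⟩
  rw [edgeSide, Set.mem_ofPred_eq, Sym2.eq_swap] at hb
  exact hT.notMem_edgeSide hab (hb.symm.trans ha)

lemma Reachable.exists_adj_mem_edgeSide (h : T.Reachable x c) (hxc : x ≠ c) :
    ∃ b, T.Adj c b ∧ x ∈ T.edgeSide b c := by
  obtain ⟨P, hP⟩ := h.symm.exists_isPath
  obtain ⟨b, hcb, Q, rfl⟩ := Walk.exists_eq_cons_of_ne hxc.symm P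
  rw [Walk.cons_isPath_iff] at hP
  refine ⟨b, hcb, reachable_deleteEdges_iff_exists_walk.mpr ⟨Q.reverse, fun he ↦ hP.2 ?_⟩⟩
  rw [Walk.edges_reverse, List.mem_reverse] at he
  exact Q.snd_mem_support_of_mem_edges he

lemma IsTree.edgeSide_ssubset (hT : T.IsTree) (hab : T.Adj a b) (hac : a ≠ c) :
    T.edgeSide a b ⊂ T.edgeSide b c := by
  refine ⟨fun x hx ↦ ?_, fun h ↦ hT.notMem_edgeSide hab (h mem_edgeSide_self)⟩
  obtain ⟨P, hPab⟩ := reachable_deleteEdges_iff_exists_walk.mp hx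
  have hbP : b ∉ P.support := fun hb ↦ hT.notMem_edgeSide hab <|
    reachable_deleteEdges_iff_exists_walk.mpr
      ⟨P.dropUntil b hb, fun he ↦ hPab (P.edges_dropUntil_subset_edges hb he)⟩
  refine reachable_deleteEdges_iff_exists_walk.mpr ⟨P.concat hab, fun he ↦ ?_⟩
  rw [Walk.edges_concat, List.concat_eq_append, List.mem_append, List.mem_singleton,
    Sym2.eq_iff] at he
  rcases he with he | ⟨rfl, -⟩ | ⟨-, rfl⟩
  · exact hbP (P.fst_mem_support_of_mem_edges he)
  · exact hab.ne rfl
  · exact hac rfl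

/-- Read `P a b` as orienting the edge `ab` from `a` to `b`. A sink is found at the head of an
edge `ab` with `P a b` whose side `T.edgeSide a b` is as large as possible. -/
lemma IsTree.exists_sink [Finite V] (hT : T.IsTree) {P : V → V → Prop}
    (hP : ∀ a b, T.Adj a b → P a b ∨ P b a) : ∃ c, ∀ x, T.Adj c x → P x c := by
  by_cases hR : ∃ a b, T.Adj a b ∧ P a b
  · obtain ⟨⟨a, b⟩, ⟨hab, hPab⟩, hmax⟩ := Set.Finite.exists_maximalFor
      (fun p : V × V ↦ (T.edgeSide p.1 p.2).ncard) {p | T.Adj p.1 p.2 ∧ P p.1 p.2}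
      (Set.toFinite _) (by obtain ⟨a, b, h⟩ := hR; exact ⟨(a, b), h⟩)
    refine ⟨b, fun x hbx ↦ ?_⟩
    rcases eq_or_ne a x with rfl | hax
    · exact hPab
    refine (hP x b hbx.symm).resolve_right fun hPbx ↦ ?_
    have hlt := Set.ncard_lt_ncard (hT.edgeSide_ssubset hab hax)
    exact hlt.not_ge (hmax (j := (b, x)) ⟨hbx, hPbx⟩ hlt.le)
  · obtain ⟨c⟩ := hT.connected.nonempty
    exact ⟨c, fun x hcx ↦ (hP x c hcx.symm).resolve_right fun h ↦ hR ⟨c, x, hcx, h⟩⟩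

lemma Preconnected.ncard_sdiff_singleton_le_of_edgeSide [Finite V] (hT : T.Preconnected)
    {N : Set V} {k : ℕ} (c : V) (hk : ∀ x, T.Adj c x → (N ∩ T.edgeSide x c).ncard ≤ k) :
    (N \ {c}).ncard ≤ (T.neighborSet c).ncard * k := by
  set s := (Set.toFinite (T.neighborSet c)).toFinset
  have hsub : N \ {c} ⊆ ⋃ x ∈ s, N ∩ T.edgeSide x c := by
    rintro u ⟨huN, huc⟩
    obtain ⟨b, hcb, hub⟩ := (hT u c).exists_adj_mem_edgeSide huc
    exact Set.mem_biUnion (x := b) (by simpa [s] using hcb) ⟨huN, hub⟩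
  calc (N \ {c}).ncard ≤ (⋃ x ∈ s, N ∩ T.edgeSide x c).ncard := Set.ncard_le_ncard hsub
    _ ≤ ∑ x ∈ s, (N ∩ T.edgeSide x c).ncard := s.set_ncard_biUnion_le _
    _ ≤ s.card • k := Finset.sum_le_card_nsmul _ _ _ fun x hx ↦ hk x (by simpa [s] using hx)
    _ = (T.neighborSet c).ncard * k := by rw [Set.ncard_eq_toFinset_card _, smul_eq_mul]

theorem IsTree.exists_adj_lt_ncard_inter_edgeSide [Finite V] (hT : T.IsTree)
    (hdeg : ∀ x, (T.neighborSet x).ncard ≤ 3) {N : Set V}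
    (hN : ∀ x ∈ N, (T.neighborSet x).ncard = 1) {k : ℕ} (hk : 1 ≤ k)
    (hNk : 3 * k + 1 ≤ N.ncard) :
    ∃ a b, T.Adj a b ∧ k < (N ∩ T.edgeSide a b).ncard ∧ k < (N ∩ T.edgeSide b a).ncard := by
  by_contra! hsmall
  obtain ⟨c, hc⟩ := hT.exists_sink (P := fun a b ↦ (N ∩ T.edgeSide a b).ncard ≤ k)
    fun a b hab ↦ (le_or_gt _ k).imp_right (hsmall a b hab)
  have hcount := hT.connected.preconnected.ncard_sdiff_singleton_le_of_edgeSide c hc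
  by_cases hcN : c ∈ N
  · rw [hN c hcN] at hcount
    have := Set.ncard_sdiff_singleton_add_one hcN
    omega
  · rw [Set.sdiff_singleton_eq_self hcN] at hcount
    have := Nat.mul_le_mul_right k (hdeg c)
    omega

end EdgeSide

section CubicTrees

variable {V W : Type*}

lemma IsTree.sum_sup_edge [Finite V] [Finite W] {G : SimpleGraph V} {H : SimpleGraph W}
    (hG : G.IsTree) (hH : H.IsTree) (v : V) (w : W) :
    (G.sum H ⊔ edge (.inl v) (.inr w)).IsTree := by
  rw [isTree_iff_connected_and_card] at *
  have hnew : s(.inl v, .inr w) ∉ (G.sum H).edgeSet :=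
    not_adj_sum_inl_inr (G := G) (H := H) v w
  refine ⟨hG.1.sum_sup_edge hH.1, ?_⟩
  rw [edgeSet_sup, edgeSet_edge_of_ne Sum.inl_ne_inr, Set.union_singleton, Nat.card_coe_set_eq,
    Set.ncard_insert_of_notMem hnew, ← Nat.card_coe_set_eq, Nat.card_congr edgeSetSumEquiv,
    Nat.card_sum, Nat.card_sum]
  omega

def addLeaf (T : SimpleGraph V) (v : V) : SimpleGraph (V ⊕ Unit) :=
  T.sum ⊥ ⊔ edge (.inl v) (.inr ())

def addCherry (T : SimpleGraph V) (v : V) : SimpleGraph ((V ⊕ Unit) ⊕ Unit) :=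
  (T.addLeaf v).addLeaf (.inl v)

variable {T : SimpleGraph V} {v : V}

lemma IsTree.addLeaf [Finite V] (hT : T.IsTree) (v : V) : (T.addLeaf v).IsTree :=
  hT.sum_sup_edge .of_subsingleton v ()

lemma ncard_neighborSet_addLeaf_inr (u : Unit) :
    ((T.addLeaf v).neighborSet (.inr u)).ncard = 1 := by
  convert Set.ncard_singleton (Sum.inl v : V ⊕ Unit)
  ext (y | y) <;> simp [addLeaf, edge_adj]

lemma ncard_neighborSet_addLeaf_inl [Finite V] [DecidableEq V] (x : V) :
    ((T.addLeaf v).neighborSet (.inl x)).ncard =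
      (T.neighborSet x).ncard + if x = v then 1 else 0 := by
  split_ifs with hxv
  · subst hxv
    have : (T.addLeaf x).neighborSet (.inl x) = insert (.inr ()) (.inl '' T.neighborSet x) := by
      ext (y | y) <;> simp [addLeaf, edge_adj]
    rw [this, Set.ncard_insert_of_notMem (by simp),
      Set.ncard_image_of_injective _ Sum.inl_injective]
  · have : (T.addLeaf v).neighborSet (.inl x) = .inl '' T.neighborSet x := by
      ext (y | y) <;> simp [addLeaf, edge_adj, hxv]
    rw [this, Set.ncard_image_of_injective _ Sum.inl_injective, add_zero]

lemma ncard_neighborSet_addCherry_inl_inl [Finite V] [DecidableEq V] (x : V) :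
    ((T.addCherry v).neighborSet (.inl (.inl x))).ncard =
      (T.neighborSet x).ncard + if x = v then 2 else 0 := by
  rw [addCherry, ncard_neighborSet_addLeaf_inl, ncard_neighborSet_addLeaf_inl]
  split_ifs <;> simp_all

lemma ncard_neighborSet_addCherry_eq_one_or_three [Finite V]
    (hdeg : ∀ x, (T.neighborSet x).ncard = 1 ∨ (T.neighborSet x).ncard = 3)
    (hv : (T.neighborSet v).ncard = 1) (z : (V ⊕ Unit) ⊕ Unit) :
    ((T.addCherry v).neighborSet z).ncard = 1 ∨ ((T.addCherry v).neighborSet z).ncard = 3 := by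
  rcases z with ((x | u) | u)
  · rw [ncard_neighborSet_addCherry_inl_inl]
    split_ifs with hxv
    · subst hxv; omega
    · simpa using hdeg x
  · left
    rw [addCherry, ncard_neighborSet_addLeaf_inl, ncard_neighborSet_addLeaf_inr, if_neg (by simp)]
  · exact .inl (ncard_neighborSet_addLeaf_inr u)

lemma natCard_leaves_addCherry [Finite V] (hv : (T.neighborSet v).ncard = 1) :
    Nat.card {z // ((T.addCherry v).neighborSet z).ncard = 1} =
      Nat.card {x // (T.neighborSet x).ncard = 1} + 1 := by
  have := Fintype.ofFinite V
  have hleaf : ∀ x, (if (T.neighborSet x).ncard = 1 then 1 else 0) =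
      (if ((T.addCherry v).neighborSet (.inl (.inl x))).ncard = 1 then 1 else 0) +
        if x = v then 1 else 0 := by
    intro x
    rw [ncard_neighborSet_addCherry_inl_inl]
    split_ifs <;> simp_all
  simp only [Nat.card_eq_fintype_card, Fintype.card_subtype, Finset.card_filter,
    Fintype.sum_sum_type, hleaf, Finset.sum_add_distrib, Finset.sum_ite_eq', Finset.mem_univ]
  simp [addCherry, ncard_neighborSet_addLeaf_inl, ncard_neighborSet_addLeaf_inr]

lemma exists_isTree_natCard_leaves_eq {n : ℕ} (hn : 2 ≤ n) :
    ∃ (t : Type) (_ : Fintype t) (T : SimpleGraph t), T.IsTree ∧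
      (∀ x, (T.neighborSet x).ncard = 1 ∨ (T.neighborSet x).ncard = 3) ∧
      Nat.card {x // (T.neighborSet x).ncard = 1} = n := by
  induction n, hn using Nat.le_induction with
  | base =>
    have hdeg : ∀ z, (((⊥ : SimpleGraph Unit).addLeaf ()).neighborSet z).ncard = 1 := by
      rintro (u | u)
      · simp [ncard_neighborSet_addLeaf_inl]
      · exact ncard_neighborSet_addLeaf_inr u
    refine ⟨Unit ⊕ Unit, inferInstance, _, IsTree.of_subsingleton.addLeaf (),
      fun z ↦ .inl (hdeg z), ?_⟩
    rw [Nat.card_congr (Equiv.subtypeUnivEquiv hdeg)]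
    simp
  | succ n _ ih =>
    obtain ⟨t, _, T, hT, hdeg, hcard⟩ := ih
    obtain ⟨⟨v, hv⟩⟩ : Nonempty {x // (T.neighborSet x).ncard = 1} :=
      (Nat.card_pos_iff.mp (by omega)).1
    exact ⟨_, inferInstance, T.addCherry v, (hT.addLeaf v).addLeaf _,
      ncard_neighborSet_addCherry_eq_one_or_three hdeg hv, hcard ▸ natCard_leaves_addCherry hv⟩

end CubicTrees

end SimpleGraph

section RankDecomposition

variable {V : Type*} [Fintype V] {G : SimpleGraph V}

lemma cutRank_le_card (G : SimpleGraph V) (S : Set V) : cutRank G S ≤ Fintype.card V :=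
  (Matrix.rank_le_card_height _).trans (Fintype.card_le_of_injective _ Subtype.val_injective)

lemma HasRankDecompWidth.mono {p q : ℕ} (h : HasRankDecompWidth G p) (hpq : p ≤ q) :
    HasRankDecompWidth G q := by
  obtain ⟨t, ht, T, hT, hdeg, L, hL⟩ := h
  exact ⟨t, ht, T, hT, hdeg, L, fun a b hab ↦ (hL a b hab).trans hpq⟩

lemma hasRankDecompWidth_card (G : SimpleGraph V) (hV : 2 ≤ Fintype.card V) :
    HasRankDecompWidth G (Fintype.card V) := by
  obtain ⟨t, ht, T, hT, hdeg, hcard⟩ := SimpleGraph.exists_isTree_natCard_leaves_eq hV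
  obtain ⟨L⟩ := Finite.card_eq.mp (Nat.card_eq_fintype_card.trans hcard.symm)
  exact ⟨t, ht, T, hT, hdeg, L, fun _ _ _ ↦ cutRank_le_card G _⟩

lemma HasRankDecompWidth.of_rankWidth_le {q : ℕ} (hV : 2 ≤ Fintype.card V)
    (hq : rankWidth G ≤ q) : HasRankDecompWidth G q := by
  rw [rankWidth, if_neg hV.not_gt] at hq
  exact HasRankDecompWidth.mono (Nat.sInf_mem (s := {q | HasRankDecompWidth G q})
    ⟨_, hasRankDecompWidth_card G hV⟩) hq

end RankDecomposition

/-- If `G` has rank-width at most `q` and `M ⊆ V(G)` has `|M| ≥ 3k + 1` for a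
positive integer `k`, then there is a vertex partition `(X, Xᶜ)` with
`cutRank G X ≤ q`, `|M ∩ X| > k` and `|M ∩ Xᶜ| > k`. -/
theorem balanced_partition_of_rankWidth {V : Type*} [Fintype V] (G : SimpleGraph V)
    (q k : ℕ) (hk : 1 ≤ k) (hq : rankWidth G ≤ q)
    (M : Set V) (hM : 3 * k + 1 ≤ M.ncard) :
    ∃ X : Set V, cutRank G X ≤ q ∧ k < (M ∩ X).ncard ∧ k < (M ∩ Xᶜ).ncard := by
  have hV : 2 ≤ Fintype.card V := by
    have := M.ncard_le_card
    rw [Nat.card_eq_fintype_card] at this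
    omega
  obtain ⟨t, _, T, hT, hdeg, L, hwidth⟩ := HasRankDecompWidth.of_rankWidth_le hV hq
  set f : V → t := fun u ↦ (L u).1
  have hf : f.Injective := fun u v h ↦ L.injective (Subtype.ext h)
  have hf_ncard (S : Set t) : (M ∩ f ⁻¹' S).ncard = (f '' M ∩ S).ncard := by
    rw [← Set.image_inter_preimage, Set.ncard_image_of_injective _ hf]
  obtain ⟨a, b, hab, ha, hb⟩ := hT.exists_adj_lt_ncard_inter_edgeSide (N := f '' M)
    (fun x ↦ by rcases hdeg x with h | h <;> omega)
    (by rintro _ ⟨u, -, rfl⟩; exact (L u).2) hk (by rwa [Set.ncard_image_of_injective _ hf])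
  refine ⟨f ⁻¹' T.edgeSide a b, hwidth a b hab, by rwa [hf_ncard], ?_⟩
  rwa [← Set.preimage_compl, hT.compl_edgeSide hab, hf_ncard]
end

section
/- For every $n \geq 1$, the graph $K_n \tri K_n$ has no induced cycle of length 4, and consequently no induced subgraph isomorphic to the wheel $W_4$ or to $\overline{BW_3}$. -/
open scoped Classical

/-- The graph `K_n ⊲ K_n`: two copies of `K_n` with orderings `v_1, …, v_n` and
`w_1, …, w_n`, where `v_i w_j` is an edge iff `i ≥ j`. -/
def KtriK (n : ℕ) : SimpleGraph (Fin n ⊕ Fin n) where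
  Adj a b := a ≠ b ∧
    (match a, b with
     | Sum.inl _, Sum.inl _ => True
     | Sum.inr _, Sum.inr _ => True
     | Sum.inl i, Sum.inr j => j ≤ i
     | Sum.inr j, Sum.inl i => j ≤ i)
  symm := ⟨by rintro (i | i) (j | j) ⟨h1, h2⟩ <;> exact ⟨Ne.symm h1, h2⟩⟩
  loopless := ⟨by rintro (i | i) ⟨h1, _⟩ <;> exact h1 rfl⟩

/-- `H` is isomorphic to an induced subgraph of `G`. -/
def HasInducedCopy {V W : Type*} (G : SimpleGraph V) (H : SimpleGraph W) : Prop :=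
  ∃ S : Set V, Nonempty (H ≃g G.induce S)

/-- The wheel `W_4`: a 4-cycle `0 1 2 3` plus the hub `4` adjacent to all cycle vertices. -/
def W4 : SimpleGraph (Fin 5) :=
  SimpleGraph.fromRel (fun a b =>
    (a = 0 ∧ b = 1) ∨ (a = 1 ∧ b = 2) ∨ (a = 2 ∧ b = 3) ∨ (a = 3 ∧ b = 0) ∨
    (a = 4 ∧ (b = 0 ∨ b = 1 ∨ b = 2 ∨ b = 3)))

/-- `BW_3`: two triangles `0 1 2` and `3 4 5`, a perfect matching `0-3`, `1-4`, `2-5`,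
and a vertex `6` adjacent to `3, 4, 5`. -/
def BW3 : SimpleGraph (Fin 7) :=
  SimpleGraph.fromRel (fun a b =>
    (a = 0 ∧ b = 1) ∨ (a = 0 ∧ b = 2) ∨ (a = 1 ∧ b = 2) ∨
    (a = 3 ∧ b = 4) ∨ (a = 3 ∧ b = 5) ∨ (a = 4 ∧ b = 5) ∨
    (a = 0 ∧ b = 3) ∨ (a = 1 ∧ b = 4) ∨ (a = 2 ∧ b = 5) ∨
    (a = 6 ∧ (b = 3 ∨ b = 4 ∨ b = 5)))

/-! A non-adjacent pair of distinct vertices of `K_n ⊲ K_n` is some `v_i, w_k` with `i < k`. The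
diagonals of an induced 4-cycle would be two such pairs `v_i w_k` and `v_j w_l`, each vertex of one
adjacent to both vertices of the other; the edges `v_i w_l` and `v_j w_k` then force
`l ≤ i < k ≤ j < l`. Both `W_4` and the complement of `BW_3` contain an induced 4-cycle. -/

open SimpleGraph Sum

lemma hasInducedCopy_iff_isIndContained {V W : Type*} {G : SimpleGraph V} {H : SimpleGraph W} :
    HasInducedCopy G H ↔ H ⊴ G :=
  isIndContained_iff_exists_iso_induce.symm

section KtriK

variable {n : ℕ} {i j : Fin n}

@[simp] lemma KtriK_adj_inl_inl : (KtriK n).Adj (inl i) (inl j) ↔ i ≠ j := by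
  simp [KtriK]

@[simp] lemma KtriK_adj_inr_inr : (KtriK n).Adj (inr i) (inr j) ↔ i ≠ j := by
  simp [KtriK]

@[simp] lemma KtriK_adj_inl_inr : (KtriK n).Adj (inl i) (inr j) ↔ j ≤ i := by
  simp [KtriK]

@[simp] lemma KtriK_adj_inr_inl : (KtriK n).Adj (inr j) (inl i) ↔ j ≤ i := by
  simp [KtriK]

lemma KtriK_exists_lt_of_not_adj {a b : Fin n ⊕ Fin n} (hne : a ≠ b)
    (h : ¬ (KtriK n).Adj a b) :
    ∃ i j : Fin n, i < j ∧ ({a, b} : Set (Fin n ⊕ Fin n)) = {inl i, inr j} := by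
  rcases a with i | i <;> rcases b with j | j
  · exact absurd (KtriK_adj_inl_inl.mpr (hne <| congrArg inl ·)) h
  · exact ⟨i, j, not_le.mp (KtriK_adj_inl_inr.not.mp h), rfl⟩
  · exact ⟨j, i, not_le.mp (KtriK_adj_inr_inl.not.mp h), Set.pair_comm _ _⟩
  · exact absurd (KtriK_adj_inr_inr.mpr (hne <| congrArg inr ·)) h

lemma KtriK_not_induced_square {a b c d : Fin n ⊕ Fin n} (hac : a ≠ c) (hbd : b ≠ d)
    (hac' : ¬ (KtriK n).Adj a c) (hbd' : ¬ (KtriK n).Adj b d)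
    (hcross : ∀ x ∈ ({a, c} : Set _), ∀ y ∈ ({b, d} : Set _), (KtriK n).Adj x y) : False := by
  obtain ⟨i, k, hik, hac⟩ := KtriK_exists_lt_of_not_adj hac hac'
  obtain ⟨j, l, hjl, hbd⟩ := KtriK_exists_lt_of_not_adj hbd hbd'
  rw [hac, hbd] at hcross
  have hli : l ≤ i := KtriK_adj_inl_inr.mp (hcross _ (by simp) _ (by simp))
  have hkj : k ≤ j := KtriK_adj_inr_inl.mp (hcross _ (by simp) _ (by simp))
  exact (hli.trans_lt (hik.trans_le hkj |>.trans hjl)).false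

theorem cycleGraph_four_not_isIndContained_KtriK (n : ℕ) : ¬ cycleGraph 4 ⊴ KtriK n := by
  rintro ⟨f⟩
  refine KtriK_not_induced_square (a := f 0) (b := f 1) (c := f 2) (d := f 3)
    (f.injective.ne (by decide)) (f.injective.ne (by decide))
    (f.map_adj_iff.not.mpr (by decide)) (f.map_adj_iff.not.mpr (by decide)) ?_
  simp only [Set.mem_insert_iff, Set.mem_singleton_iff]
  rintro x (rfl | rfl) y (rfl | rfl) <;> exact f.map_adj_iff.mpr (by decide)

end KtriK

theorem cycleGraph_four_isIndContained_W4 : cycleGraph 4 ⊴ W4 :=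
  ⟨⟨⟨Fin.castSucc, Fin.castSucc_injective _⟩, fun {a b} => by
    simp only [W4, fromRel_adj]; revert a b; decide⟩⟩

theorem cycleGraph_four_isIndContained_compl_BW3 : cycleGraph 4 ⊴ BW3ᶜ :=
  ⟨⟨⟨![6, 0, 4, 2], by decide⟩, fun {a b} => by
    simp only [BW3, compl_adj, fromRel_adj]; revert a b; decide⟩⟩

theorem KtriK_no_induced_C4_general (n : ℕ) :
    ¬ HasInducedCopy (KtriK n) (SimpleGraph.cycleGraph 4) ∧
    ¬ HasInducedCopy (KtriK n) W4 ∧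
    ¬ HasInducedCopy (KtriK n) BW3ᶜ := by
  simp only [hasInducedCopy_iff_isIndContained]
  have hC4 := cycleGraph_four_not_isIndContained_KtriK n
  exact ⟨hC4, fun h => hC4 (cycleGraph_four_isIndContained_W4.trans h),
    fun h => hC4 (cycleGraph_four_isIndContained_compl_BW3.trans h)⟩

/-- For `n ≥ 1`, `K_n ⊲ K_n` has no induced 4-cycle; consequently no induced subgraph
isomorphic to `W_4` or to the complement of `BW_3`. -/
theorem KtriK_no_induced_C4 (n : ℕ) (hn : 1 ≤ n) :
    ¬ HasInducedCopy (KtriK n) (SimpleGraph.cycleGraph 4) ∧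
    ¬ HasInducedCopy (KtriK n) W4 ∧
    ¬ HasInducedCopy (KtriK n) BW3ᶜ :=
  KtriK_no_induced_C4_general n
end
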